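/- (Double angle-axis representation on the surface of the π-ball) For every r ∈ ℝ³ with ‖r‖ = π, the two antipodal angle-axis vectors r and −r represent the same rotation: exp([r]ₓ) = exp([−r]ₓ). -/

import Mathlib

open Matrix Real

/-- The skew-symmetric cross-product matrix of a vector `r ∈ ℝ³`. -/
noncomputable def crossMat (r : EuclideanSpace ℝ (Fin 3)) : Matrix (Fin 3) (Fin 3) ℝ :=
  !![0, -r 2, r 1; r 2, 0, -r 0; -r 1, r 0, 0]

/-- The rotation matrix `R_r = exp([r]ₓ)` of an angle-axis vector `r ∈ ℝ³`. -/
noncomputable def rotOf (r : EuclideanSpace ℝ (Fin 3)) : Matrix (Fin 3) (Fin 3) ℝ :=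
  NormedSpace.exp (crossMat r)

/-!
`exp a - exp (-a)` is twice the odd part of the exponential series. For `K = [r]ₓ` one has
`K³ = -‖r‖² K`, so `K^(2k+1) = (-‖r‖²)^k K` and the odd part collapses to `(sin ‖r‖ / ‖r‖) K`,
which vanishes when `‖r‖ = π`. As `[-r]ₓ = -K`, this gives `exp K = exp (-K)`.
-/

open NormedSpace
open scoped Nat

theorem pow_two_mul_add_one_of_pow_three_eq_smul {R A : Type*} [CommSemiring R] [Semiring A]
    [Algebra R A] {a : A} {c : R} (h : a ^ 3 = c • a) (k : ℕ) :
    a ^ (2 * k + 1) = c ^ k • a := by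
  induction k with
  | zero => simp
  | succ k ih =>
    rw [show 2 * (k + 1) + 1 = 2 * k + 1 + 2 by ring, pow_add, ih, smul_mul_assoc, ← pow_succ',
      h, smul_smul, pow_succ]

theorem Real.hasSum_sin_div {θ : ℝ} (hθ : θ ≠ 0) :
    HasSum (fun k : ℕ => ((2 * k + 1)! : ℝ)⁻¹ * (-θ ^ 2) ^ k) (sin θ / θ) := by
  refine ((Real.hasSum_sin θ).div_const θ).congr_fun fun k => ?_
  rw [neg_pow, ← pow_mul, pow_succ]
  field_simp

theorem hasSum_exp_sub_exp_neg (𝕂 : Type*) {𝔸 : Type*} [NontriviallyNormedField 𝕂] [CharZero 𝕂]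
    [ContinuousSMul ℚ 𝕂] [NormedRing 𝔸] [NormedAlgebra 𝕂 𝔸] [CompleteSpace 𝔸] (a : 𝔸) :
    HasSum (fun k : ℕ => (2 * ((2 * k + 1)! : 𝕂)⁻¹) • a ^ (2 * k + 1)) (exp a - exp (-a)) := by
  have h := (exp_series_hasSum_exp' (𝕂 := 𝕂) a).sub (exp_series_hasSum_exp' (𝕂 := 𝕂) (-a))
  simp only [← smul_sub] at h
  have hodd : Function.Injective fun k : ℕ => 2 * k + 1 := fun _ _ h => by simpa using h
  rw [← hodd.hasSum_iff] at h
  · refine h.congr_fun fun k => ?_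
    rw [Function.comp_apply, Odd.neg_pow ⟨k, rfl⟩, sub_neg_eq_add, mul_comm, mul_smul, two_smul]
  · intro n hn
    have heven : Even n := Nat.not_odd_iff_even.mp fun ⟨k, hk⟩ => hn ⟨k, hk.symm⟩
    simp [heven.neg_pow]

theorem exp_sub_exp_neg_of_pow_three_eq {𝔸 : Type*} [NormedRing 𝔸] [NormedAlgebra ℝ 𝔸]
    [CompleteSpace 𝔸] {a : 𝔸} {θ : ℝ} (hθ : θ ≠ 0) (h : a ^ 3 = (-θ ^ 2) • a) :
    exp a - exp (-a) = (2 * (sin θ / θ)) • a := by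
  refine (hasSum_exp_sub_exp_neg ℝ a).unique ?_
  refine (((Real.hasSum_sin_div hθ).mul_left 2).smul_const a).congr_fun fun k => ?_
  rw [pow_two_mul_add_one_of_pow_three_eq_smul h, smul_smul, mul_assoc]

theorem crossMat_neg (r : EuclideanSpace ℝ (Fin 3)) : crossMat (-r) = -crossMat r := by
  ext i j
  fin_cases i <;> fin_cases j <;> simp [crossMat]

theorem crossMat_pow_three (r : EuclideanSpace ℝ (Fin 3)) :
    crossMat r ^ 3 = (-‖r‖ ^ 2) • crossMat r := by
  rw [EuclideanSpace.real_norm_sq_eq, Fin.sum_univ_three, pow_three]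
  ext i j
  fin_cases i <;> fin_cases j <;> simp [crossMat] <;> ring

theorem antipodal_angle_axis_same_rotation (r : EuclideanSpace ℝ (Fin 3))
    (hr : ‖r‖ = Real.pi) :
    NormedSpace.exp (crossMat r) = NormedSpace.exp (crossMat (-r)) := by
  let : NormedRing (Matrix (Fin 3) (Fin 3) ℝ) := Matrix.linftyOpNormedRing
  let : NormedAlgebra ℝ (Matrix (Fin 3) (Fin 3) ℝ) := Matrix.linftyOpNormedAlgebra
  have h := exp_sub_exp_neg_of_pow_three_eq pi_ne_zero (hr ▸ crossMat_pow_three r)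
  rw [sin_pi, zero_div, mul_zero, zero_smul, sub_eq_zero] at h
  rwa [crossMat_neg]
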